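/- There exists δ > 0 such that for every real φ with 0 < |φ| ≤ δ one has φ · h(φ) ≤ −φ²/48; equivalently, 1/φ² − e^φ/(e^φ − 1)² ≥ 1/24 for all φ with 0 < |φ| ≤ δ. -/
import Mathlib


/-- `h(φ) = −(φ/2)(1/φ² − e^φ/(e^φ − 1)²)` for `φ ≠ 0`, and `h(0) = 0`. -/
noncomputable def hFun (φ : ℝ) : ℝ :=
  if φ = 0 then 0
  else -(φ / 2) * (1 / φ ^ 2 - Real.exp φ / (Real.exp φ - 1) ^ 2)

set_option maxHeartbeats 1000000 in
lemma key_ineq (φ : ℝ) (h0 : φ ≠ 0) (hδ : |φ| ≤ 1/10) :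
    1 / 24 ≤ 1 / φ ^ 2 - Real.exp φ / (Real.exp φ - 1) ^ 2 := by
  have hab : |φ| ≤ 1 := by linarith
  have hb := Real.exp_bound hab (n := 4) (by norm_num)
  have hsum : (∑ i ∈ Finset.range 4, φ ^ i / i.factorial)
      = 1 + φ + φ ^ 2 / 2 + φ ^ 3 / 6 := by
    simp [Finset.sum_range_succ, Nat.factorial]
  rw [hsum] at hb
  have hb' : |Real.exp φ - (1 + φ + φ ^ 2 / 2 + φ ^ 3 / 6)| ≤ |φ|^4 * (5/96) := by
    refine le_trans hb (le_of_eq ?_)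
    norm_num [Nat.factorial]
  clear hb
  rename' hb' => hb
  have h1 : Real.exp φ - (1 + φ + φ ^ 2 / 2 + φ ^ 3 / 6) ≤ |φ|^4 * (5/96) :=
    le_trans (le_abs_self _) hb
  have h2 : -(|φ|^4 * (5/96)) ≤ Real.exp φ - (1 + φ + φ ^ 2 / 2 + φ ^ 3 / 6) :=
    neg_le_of_abs_le hb
  have habs4 : |φ|^4 = φ^4 := by
    rw [← abs_pow, abs_of_nonneg (by positivity)]
  rw [habs4] at h1 h2
  have hφ1 : φ ≤ 1/10 := le_trans (le_abs_self _) hδ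
  have hφ2 : -(1/10) ≤ φ := neg_le_of_abs_le hδ
  set E := Real.exp φ with hE
  have hEne : E - 1 ≠ 0 := by
    intro h
    apply h0
    have hE1 : Real.exp φ = Real.exp 0 := by rw [Real.exp_zero]; linarith
    exact Real.exp_eq_exp.mp hE1
  obtain ⟨r, hErep, hr1, hr2⟩ :
      ∃ r : ℝ, E = 1 + φ + φ ^ 2 / 2 + φ ^ 3 / 6 + r ∧ r ≤ 5*φ^4/96 ∧ -(5*φ^4/96) ≤ r :=
    ⟨E - (1 + φ + φ ^ 2 / 2 + φ ^ 3 / 6), by ring, by linarith, by linarith⟩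
  clear_value E
  clear hb h1 h2 hE
  have h4 : (0:ℝ) ≤ φ^4 := by positivity
  have hE2 : φ ^ 2 ≤ 1/100 := by
    nlinarith [abs_nonneg φ, sq_abs φ]
  have h6 : (0:ℝ) ≤ φ^6 := by positivity
  have h8 : (0:ℝ) ≤ φ^8 := by positivity
  have fA : (0:ℝ) ≤ φ^4/96 + 2*(r*φ) := by
    nlinarith [mul_nonneg (by linarith : (0:ℝ) ≤ 5*φ^4/96 - r) (by linarith : (0:ℝ) ≤ 1/10 - φ),
      mul_nonneg (by linarith : (0:ℝ) ≤ 5*φ^4/96 + r) (by linarith : (0:ℝ) ≤ 1/10 + φ)]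
  have fB := sq_nonneg (3*φ^3 + r)
  have fJ : (0:ℝ) ≤ φ^4 * ((5*φ^4/96 - r) * (1 + φ/3)) :=
    mul_nonneg h4 (mul_nonneg (by linarith) (by linarith))
  have fK : φ^2 * r^2 ≤ (1/100) * r^2 := mul_le_mul_of_nonneg_right hE2 (sq_nonneg r)
  have fG1 : (0:ℝ) ≤ φ^4 * (1/10 - φ) := mul_nonneg h4 (by linarith)
  have fG2 : (0:ℝ) ≤ φ^4 * (1/10 + φ) := mul_nonneg h4 (by linarith)
  have fF : φ^4 * φ^2 ≤ φ^4 * (1/100) := mul_le_mul_of_nonneg_left hE2 h4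
  have fI1 : (0:ℝ) ≤ φ^6 * (1/10 - φ) := mul_nonneg h6 (by linarith)
  have fI2 : (0:ℝ) ≤ φ^6 * (1/10 + φ) := mul_nonneg h6 (by linarith)
  have fH : φ^6 * φ^2 ≤ φ^6 * (1/100) := mul_le_mul_of_nonneg_left hE2 h6
  have f9 : (0:ℝ) ≤ φ^8 * (1/10 - φ) := mul_nonneg h8 (by linarith)
  have f92 : (0:ℝ) ≤ φ^8 * (1/10 + φ) := mul_nonneg h8 (by linarith)
  have hP : 0 ≤ 24*(E-1)^2 - 24*φ^2*E - φ^2*(E-1)^2 := by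
    rw [hErep]
    linarith [fA, fB, fJ, fK, fG1, fG2, fF, fI1, fI2, fH, f9, f92, sq_nonneg r, h4, h6, h8]
  have hden : 0 < 24*φ^2*(E-1)^2 := by positivity
  have hkey : 1 / φ ^ 2 - E / (E - 1) ^ 2 - 1/24
      = (24*(E-1)^2 - 24*φ^2*E - φ^2*(E-1)^2) / (24*φ^2*(E-1)^2) := by
    field_simp
  have := div_nonneg hP hden.le
  linarith [hkey ▸ this]

theorem stmt17 :
    ∃ δ > 0, ∀ φ : ℝ, 0 < |φ| → |φ| ≤ δ →
      φ * hFun φ ≤ -φ ^ 2 / 48 ∧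
      1 / 24 ≤ 1 / φ ^ 2 - Real.exp φ / (Real.exp φ - 1) ^ 2 := by
  refine ⟨1/10, by norm_num, fun φ hpos hle => ?_⟩
  have h0 : φ ≠ 0 := by
    intro h; simp [h] at hpos
  have hk := key_ineq φ h0 hle
  refine ⟨?_, hk⟩
  rw [hFun, if_neg h0]
  have hsq : 0 ≤ φ ^ 2 := sq_nonneg φ
  nlinarith [mul_le_mul_of_nonneg_left hk hsq]
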